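/- Under assumptions (A1)–(A3), the Nemytskii operator N_F : C^0([0,T], C^0([-r,0], ℝ^n)) × C^0([0,T], ℝ^n) → C^0([0,T], ℝ), N_F(U,v) := (t ↦ F(t, U(t), v(t))), is of class C^1, and DN_F(U,v)·(δU, δv) = (t ↦ D_2F(t,U(t),v(t))·δU(t) + D_3F(t,U(t),v(t))·δv(t)). -/

import Mathlib

/-!
A function with a continuous partial derivative in the first variable and a partial derivative
in the second one is jointly differentiable: the mean value inequality in the first variable
controls `f (x + a) (y + b) - f x (y + b)`. For the Nemytskii operator `u ↦ (t ↦ g (t, u t))`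
the mean value inequality is applied at each `t` separately; the remainders are uniformly small
because `u ↦ (t ↦ D (t, u t))` is continuous in the sup norm, which uses compactness of the
time domain.
-/

section PartialDerivatives

variable {E F G : Type*} [NormedAddCommGroup E] [NormedSpace ℝ E] [NormedAddCommGroup F]
  [NormedSpace ℝ F] [NormedAddCommGroup G] [NormedSpace ℝ G]

theorem hasFDerivAt_uncurry_of_partial {f : E → F → G} {D₁ : E → F → E →L[ℝ] G}
    {D₂ : F →L[ℝ] G} {x : E} {y : F} (h₁ : ∀ x' y', HasFDerivAt (f · y') (D₁ x' y') x')
    (h₁c : ContinuousAt (fun p : E × F => D₁ p.1 p.2) (x, y)) (h₂ : HasFDerivAt (f x) D₂ y) :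
    HasFDerivAt (fun p : E × F => f p.1 p.2) ((D₁ x y).coprod D₂) (x, y) := by
  have hsnd : HasFDerivAt (fun p : E × F => f x p.2) (D₂.comp (.snd ℝ E F)) (x, y) :=
    h₂.comp (x, y) hasFDerivAt_snd
  have hfst : HasFDerivAt (fun p : E × F => f p.1 p.2 - f x p.2)
      ((D₁ x y).comp (.fst ℝ E F)) (x, y) := by
    refine .of_isLittleO (.of_bound fun ε hε => ?_)
    obtain ⟨δ, hδ, hD₁⟩ := Metric.eventually_nhds_iff_ball.1
      (h₁c.eventually (Metric.closedBall_mem_nhds _ hε))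
    filter_upwards [Metric.ball_mem_nhds _ hδ] with p hp
    rw [Metric.mem_ball, Prod.dist_eq, max_lt_iff] at hp
    have hseg : ∀ z ∈ segment ℝ x p.1, ‖D₁ z p.2 - D₁ x y‖ ≤ ε := fun z hz => by
      have hz' : dist z x < δ :=
        (convex_ball x δ).segment_subset (Metric.mem_ball_self hδ) hp.1 hz
      simpa [dist_eq_norm] using hD₁ (z, p.2) (by simpa [Prod.dist_eq] using ⟨hz', hp.2⟩)
    have hmvt := (convex_segment x p.1).norm_image_sub_le_of_norm_hasFDerivWithin_le'
      (fun z _ => (h₁ z p.2).hasFDerivWithinAt) hseg (left_mem_segment ..) (right_mem_segment ..)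
    calc _ = ‖f p.1 p.2 - f x p.2 - D₁ x y (p.1 - x)‖ := by simp
      _ ≤ ε * ‖p.1 - x‖ := hmvt
      _ ≤ ε * ‖p - (x, y)‖ := by gcongr; exact norm_fst_le (p - (x, y))
  have h := hfst.add hsnd
  simp only [Pi.add_def, sub_add_cancel] at h
  exact h

end PartialDerivatives

namespace ContinuousMap

variable {ι : Type*} [TopologicalSpace ι]

section Nemytskii

variable {X Y : Type*} [TopologicalSpace X] [TopologicalSpace Y]

def nemytskii (g : C(ι × X, Y)) (u : C(ι, X)) : C(ι, Y) :=
  g.comp ((ContinuousMap.id ι).prodMk u)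

@[simp] lemma nemytskii_apply (g : C(ι × X, Y)) (u : C(ι, X)) (t : ι) :
    nemytskii g u t = g (t, u t) := rfl

lemma continuous_nemytskii [LocallyCompactPair ι X] (g : C(ι × X, Y)) : Continuous (nemytskii g) :=
  continuous_of_continuous_uncurry _ <| g.continuous.comp <| continuous_snd.prodMk continuous_eval

end Nemytskii

section Pairing

variable {R E F : Type*} [Semiring R] [TopologicalSpace E] [AddCommMonoid E] [ContinuousAdd E]
  [Module R E] [ContinuousConstSMul R E] [TopologicalSpace F] [AddCommMonoid F] [ContinuousAdd F]
  [Module R F] [ContinuousConstSMul R F] [LocallyCompactPair ι E] [LocallyCompactPair ι F]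

def prodMkCLM : C(ι, E) × C(ι, F) →L[R] C(ι, E × F) where
  toFun p := p.1.prodMk p.2
  map_add' _ _ := rfl
  map_smul' _ _ := rfl
  cont := continuous_of_continuous_uncurry _ <|
    ((continuous_eval.comp (continuous_fst.fst.prodMk continuous_snd)).prodMk
      (continuous_eval.comp (continuous_fst.snd.prodMk continuous_snd)))

end Pairing

section PointwiseApply

variable [CompactSpace ι] {𝕜 E F : Type*} [NontriviallyNormedField 𝕜] [NormedAddCommGroup E]
  [NormedSpace 𝕜 E] [NormedAddCommGroup F] [NormedSpace 𝕜 F]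

noncomputable def pointwiseApply : C(ι, E →L[𝕜] F) →L[𝕜] C(ι, E) →L[𝕜] C(ι, F) :=
  LinearMap.mkContinuous₂
    (LinearMap.mk₂ 𝕜
      (fun (γ : C(ι, E →L[𝕜] F)) (u : C(ι, E)) => (⟨fun t => γ t (u t), by fun_prop⟩ : C(ι, F)))
      (fun _ _ _ => by ext; simp) (fun _ _ _ => by ext; simp)
      (fun _ _ _ => by ext; simp) (fun _ _ _ => by ext; simp))
    1 fun γ u => by
      rw [one_mul]
      refine (norm_le _ (by positivity)).2 fun t => ?_
      calc ‖γ t (u t)‖ ≤ ‖γ t‖ * ‖u t‖ := (γ t).le_opNorm _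
        _ ≤ ‖γ‖ * ‖u‖ := by gcongr <;> exact norm_coe_le_norm _ t

@[simp] lemma pointwiseApply_apply (γ : C(ι, E →L[𝕜] F)) (u : C(ι, E)) (t : ι) :
    pointwiseApply γ u t = γ t (u t) := rfl

end PointwiseApply

section Calculus

variable [CompactSpace ι] {E F G : Type*} [NormedAddCommGroup E] [NormedSpace ℝ E]
  [NormedAddCommGroup F] [NormedSpace ℝ F] [NormedAddCommGroup G] [NormedSpace ℝ G]

theorem hasFDerivAt_nemytskii {g : C(ι × E, G)} {D : C(ι × E, E →L[ℝ] G)}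
    (hg : ∀ t x, HasFDerivAt (fun x' => g (t, x')) (D (t, x)) x) (u : C(ι, E)) :
    HasFDerivAt (nemytskii g) (pointwiseApply (nemytskii D u)) u := by
  refine .of_isLittleO (.of_bound fun ε hε => ?_)
  obtain ⟨δ, hδ, hD⟩ := Metric.eventually_nhds_iff_ball.1
    ((continuous_nemytskii D).continuousAt.eventually
      (Metric.closedBall_mem_nhds (nemytskii D u) hε))
  filter_upwards [Metric.ball_mem_nhds u hδ] with w hw
  refine (norm_le _ (by positivity)).2 fun t => ?_
  have hseg : ∀ z ∈ segment ℝ (u t) (w t), ‖D (t, z) - D (t, u t)‖ ≤ ε := by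
    rintro _ ⟨a, b, ha, hb, hab, rfl⟩
    have hv : a • u + b • w ∈ Metric.ball u δ :=
      convex_ball u δ (Metric.mem_ball_self hδ) hw ha hb hab
    calc _ = dist (nemytskii D (a • u + b • w) t) (nemytskii D u t) := (dist_eq_norm ..).symm
      _ ≤ dist (nemytskii D (a • u + b • w)) (nemytskii D u) := dist_apply_le_dist t
      _ ≤ ε := hD _ hv
  have hmvt := (convex_segment (u t) (w t)).norm_image_sub_le_of_norm_hasFDerivWithin_le'
    (fun z _ => (hg t z).hasFDerivWithinAt) hseg (left_mem_segment ..) (right_mem_segment ..)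
  calc _ = ‖g (t, w t) - g (t, u t) - D (t, u t) (w t - u t)‖ := by simp
    _ ≤ ε * ‖w t - u t‖ := hmvt
    _ ≤ ε * ‖w - u‖ := by gcongr; exact norm_coe_le_norm (w - u) t

theorem exists_hasFDerivAt_nemytskii_prodMk_of_partial (f : ι → E → F → G)
    (hf : Continuous fun p : ι × E × F => f p.1 p.2.1 p.2.2)
    (D₁ : ι → E → F → E →L[ℝ] G) (hD₁ : ∀ t x y, HasFDerivAt (f t · y) (D₁ t x y) x)
    (hD₁c : Continuous fun p : ι × E × F => D₁ p.1 p.2.1 p.2.2)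
    (D₂ : ι → E → F → F →L[ℝ] G) (hD₂ : ∀ t x y, HasFDerivAt (f t x) (D₂ t x y) y)
    (hD₂c : Continuous fun p : ι × E × F => D₂ p.1 p.2.1 p.2.2) :
    ∃ DN : C(ι, E) × C(ι, F) → (C(ι, E) × C(ι, F) →L[ℝ] C(ι, G)),
      (∀ p, HasFDerivAt (nemytskii ⟨_, hf⟩ ∘ prodMkCLM (R := ℝ)) (DN p) p) ∧ Continuous DN ∧
      ∀ U v δU δv t, DN (U, v) (δU, δv) t = D₁ t (U t) (v t) (δU t) + D₂ t (U t) (v t) (δv t) := by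
  let D : C(ι × (E × F), E × F →L[ℝ] G) :=
    ⟨fun p => (D₁ p.1 p.2.1 p.2.2).coprod (D₂ p.1 p.2.1 p.2.2),
      hD₁c.continuousLinearMapCoprod hD₂c⟩
  have hD : ∀ t x, HasFDerivAt (fun x' => f t x'.1 x'.2) (D (t, x)) x := fun t x =>
    hasFDerivAt_uncurry_of_partial (hD₁ t)
      (hD₁c.comp (continuous_const.prodMk continuous_id)).continuousAt (hD₂ t x.1 x.2)
  refine ⟨fun p => (pointwiseApply (nemytskii D (prodMkCLM p))).comp prodMkCLM,
    fun p => (hasFDerivAt_nemytskii hD _).comp p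
      (prodMkCLM (ι := ι) (E := E) (F := F)).hasFDerivAt, ?_,
    fun U v δU δv t => rfl⟩
  exact (pointwiseApply.continuous.comp
    ((continuous_nemytskii D).comp prodMkCLM.continuous)).clm_comp continuous_const

end Calculus

end ContinuousMap

open ContinuousMap in
theorem stmt_13_general (r T : ℝ) (n : ℕ)
    (F : Set.Icc (0 : ℝ) T → C(Set.Icc (-r) (0 : ℝ), Fin n → ℝ) → (Fin n → ℝ) → ℝ)
    -- (A1)
    (hF : Continuous fun p : Set.Icc (0 : ℝ) T × C(Set.Icc (-r) (0 : ℝ), Fin n → ℝ) ×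
        (Fin n → ℝ) => F p.1 p.2.1 p.2.2)
    -- (A2)
    (D₂F : Set.Icc (0 : ℝ) T → C(Set.Icc (-r) (0 : ℝ), Fin n → ℝ) → (Fin n → ℝ) →
      (C(Set.Icc (-r) (0 : ℝ), Fin n → ℝ) →L[ℝ] ℝ))
    (hD₂ : ∀ t φ v, HasFDerivAt (fun ψ => F t ψ v) (D₂F t φ v) φ)
    (hD₂c : Continuous fun p : Set.Icc (0 : ℝ) T × C(Set.Icc (-r) (0 : ℝ), Fin n → ℝ) ×
        (Fin n → ℝ) => D₂F p.1 p.2.1 p.2.2)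
    -- (A3)
    (D₃F : Set.Icc (0 : ℝ) T → C(Set.Icc (-r) (0 : ℝ), Fin n → ℝ) → (Fin n → ℝ) →
      ((Fin n → ℝ) →L[ℝ] ℝ))
    (hD₃ : ∀ t φ v, HasFDerivAt (fun w => F t φ w) (D₃F t φ v) v)
    (hD₃c : Continuous fun p : Set.Icc (0 : ℝ) T × C(Set.Icc (-r) (0 : ℝ), Fin n → ℝ) ×
        (Fin n → ℝ) => D₃F p.1 p.2.1 p.2.2) :
    ∃ DN : (C(Set.Icc (0 : ℝ) T, C(Set.Icc (-r) (0 : ℝ), Fin n → ℝ)) ×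
          C(Set.Icc (0 : ℝ) T, Fin n → ℝ)) →
        ((C(Set.Icc (0 : ℝ) T, C(Set.Icc (-r) (0 : ℝ), Fin n → ℝ)) ×
          C(Set.Icc (0 : ℝ) T, Fin n → ℝ)) →L[ℝ] C(Set.Icc (0 : ℝ) T, ℝ)),
      (∀ p : C(Set.Icc (0 : ℝ) T, C(Set.Icc (-r) (0 : ℝ), Fin n → ℝ)) ×
          C(Set.Icc (0 : ℝ) T, Fin n → ℝ),
        HasFDerivAt (𝕜 := ℝ)
          (fun q : C(Set.Icc (0 : ℝ) T, C(Set.Icc (-r) (0 : ℝ), Fin n → ℝ)) ×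
              C(Set.Icc (0 : ℝ) T, Fin n → ℝ) =>
            (⟨fun t => F t (q.1 t) (q.2 t),
              hF.comp (continuous_id.prodMk
                (q.1.continuous.prodMk q.2.continuous))⟩ : C(Set.Icc (0 : ℝ) T, ℝ)))
          (DN p) p) ∧
      Continuous DN ∧
      ∀ (U : C(Set.Icc (0 : ℝ) T, C(Set.Icc (-r) (0 : ℝ), Fin n → ℝ)))
        (v : C(Set.Icc (0 : ℝ) T, Fin n → ℝ)) (δU : _) (δv : _) (t : Set.Icc (0 : ℝ) T),
        DN (U, v) (δU, δv) t =
          D₂F t (U t) (v t) (δU t) + D₃F t (U t) (v t) (δv t) :=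
  exists_hasFDerivAt_nemytskii_prodMk_of_partial F hF D₂F hD₂ hD₂c D₃F hD₃ hD₃c

/-- Under (A1)–(A3), the Nemytskii operator
`N_F : C^0([0,T], C^0([-r,0], R^n)) × C^0([0,T], R^n) → C^0([0,T], R)`,
`N_F(U,v) = (t ↦ F(t, U(t), v(t)))`, is of class `C¹` with
`DN_F(U,v)·(δU,δv) = (t ↦ D₂F(t,U(t),v(t))·δU(t) + D₃F(t,U(t),v(t))·δv(t))`. -/
theorem stmt_13 (r T : ℝ) (hr : 0 < r) (hrT : r < T) (n : ℕ)
    (F : Set.Icc (0 : ℝ) T → C(Set.Icc (-r) (0 : ℝ), Fin n → ℝ) → (Fin n → ℝ) → ℝ)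
    -- (A1)
    (hF : Continuous fun p : Set.Icc (0 : ℝ) T × C(Set.Icc (-r) (0 : ℝ), Fin n → ℝ) ×
        (Fin n → ℝ) => F p.1 p.2.1 p.2.2)
    -- (A2)
    (D₂F : Set.Icc (0 : ℝ) T → C(Set.Icc (-r) (0 : ℝ), Fin n → ℝ) → (Fin n → ℝ) →
      (C(Set.Icc (-r) (0 : ℝ), Fin n → ℝ) →L[ℝ] ℝ))
    (hD₂ : ∀ t φ v, HasFDerivAt (fun ψ => F t ψ v) (D₂F t φ v) φ)
    (hD₂c : Continuous fun p : Set.Icc (0 : ℝ) T × C(Set.Icc (-r) (0 : ℝ), Fin n → ℝ) ×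
        (Fin n → ℝ) => D₂F p.1 p.2.1 p.2.2)
    -- (A3)
    (D₃F : Set.Icc (0 : ℝ) T → C(Set.Icc (-r) (0 : ℝ), Fin n → ℝ) → (Fin n → ℝ) →
      ((Fin n → ℝ) →L[ℝ] ℝ))
    (hD₃ : ∀ t φ v, HasFDerivAt (fun w => F t φ w) (D₃F t φ v) v)
    (hD₃c : Continuous fun p : Set.Icc (0 : ℝ) T × C(Set.Icc (-r) (0 : ℝ), Fin n → ℝ) ×
        (Fin n → ℝ) => D₃F p.1 p.2.1 p.2.2) :
    ∃ DN : (C(Set.Icc (0 : ℝ) T, C(Set.Icc (-r) (0 : ℝ), Fin n → ℝ)) ×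
          C(Set.Icc (0 : ℝ) T, Fin n → ℝ)) →
        ((C(Set.Icc (0 : ℝ) T, C(Set.Icc (-r) (0 : ℝ), Fin n → ℝ)) ×
          C(Set.Icc (0 : ℝ) T, Fin n → ℝ)) →L[ℝ] C(Set.Icc (0 : ℝ) T, ℝ)),
      (∀ p : C(Set.Icc (0 : ℝ) T, C(Set.Icc (-r) (0 : ℝ), Fin n → ℝ)) ×
          C(Set.Icc (0 : ℝ) T, Fin n → ℝ),
        HasFDerivAt (𝕜 := ℝ)
          (fun q : C(Set.Icc (0 : ℝ) T, C(Set.Icc (-r) (0 : ℝ), Fin n → ℝ)) ×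
              C(Set.Icc (0 : ℝ) T, Fin n → ℝ) =>
            (⟨fun t => F t (q.1 t) (q.2 t),
              hF.comp (continuous_id.prodMk
                (q.1.continuous.prodMk q.2.continuous))⟩ : C(Set.Icc (0 : ℝ) T, ℝ)))
          (DN p) p) ∧
      Continuous DN ∧
      ∀ (U : C(Set.Icc (0 : ℝ) T, C(Set.Icc (-r) (0 : ℝ), Fin n → ℝ)))
        (v : C(Set.Icc (0 : ℝ) T, Fin n → ℝ)) (δU : _) (δv : _) (t : Set.Icc (0 : ℝ) T),
        DN (U, v) (δU, δv) t =
          D₂F t (U t) (v t) (δU t) + D₃F t (U t) (v t) (δv t) :=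
  stmt_13_general r T n F hF D₂F hD₂ hD₂c D₃F hD₃ hD₃c
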